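/- arXiv:2106.09988 — 2 statements merged into one kernel-verified Lean document; each statement's English description precedes it below -/
import Mathlib

section
/- Let K be an algebraically closed field of characteristic 2 and X = {z⁴ + B(x₁,x₂,x₃) = 0} ⊂ ℙ³(K) a normal quartic surface (B a homogeneous quartic). Then |Sing(X)| ≤ 7. -/
/-!
In characteristic 2, Euler's identity for the cubics `∂ᵢB` and `∂ᵢ∂ᵢ = 0` give
`∇B(x) = x × T(x)` with `T_k = ∂_{k+1}∂_{k+2}B`. Each `T_k` is a quadric with vanishing
gradient, i.e. a sum of squares, so `T` is a Frobenius-semilinear endomorphism of `K³` and the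
critical points of `B` in `ℙ²` are exactly the eigenlines of `T`. Since `∂F/∂z = 4z³ = 0` and
fourth roots are unique, the singular points of `X` correspond bijectively to these critical points.

An eigenline outside `ker T` contains a `T`-fixed vector. The fixed vectors form an `𝔽₂`-space
whose `𝔽₂`-independent elements are `K`-independent (a minimal relation would be shortened by
applying `T`), so there are at most `2³ - 1` nonzero ones. If `ker T ≠ 0`, the fixed vectors lie in
the span of the image of `T`, of dimension at most 2, while `ker T` contributes a single point:
a plane of kernel vectors would give infinitely many singular points.
-/

open MvPolynomial Module
open scoped LinearAlgebra.Projectivization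

namespace MvPolynomial

variable {σ R : Type*}

theorem IsHomogeneous.eval_smul [CommSemiring R] [Fintype σ] {φ : MvPolynomial σ R} {n : ℕ}
    (hφ : φ.IsHomogeneous n) (c : R) (x : σ → R) : eval (c • x) φ = c ^ n * eval x φ := by
  rw [eval_eq', eval_eq', Finset.mul_sum]
  refine Finset.sum_congr rfl fun d hd => ?_
  have hdeg : ∑ i, d i = n := by
    rw [← Finsupp.degree_eq_sum, Finsupp.degree_eq_weight_one]
    exact hφ (mem_support_iff.mp hd)
  simp only [Pi.smul_apply, smul_eq_mul, mul_pow, Finset.prod_mul_distrib,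
    Finset.prod_pow_eq_pow_sum, hdeg]
  ring

theorem pderiv_comm [CommSemiring R] (i j : σ) (f : MvPolynomial σ R) :
    pderiv i (pderiv j f) = pderiv j (pderiv i f) := by
  classical
  ext m
  rcases eq_or_ne i j with rfl | hij
  · rfl
  simp only [coeff_pderiv, Finsupp.add_apply, Finsupp.single_eq_of_ne hij,
    Finsupp.single_eq_of_ne hij.symm, add_zero, add_right_comm m]
  ring

theorem IsHomogeneous.exists_eq_single_two_of_pderiv_eq_zero [CommSemiring R]
    {Q : MvPolynomial σ R} (hQ : Q.IsHomogeneous 2) (hQ' : ∀ i, pderiv i Q = 0)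
    {d : σ →₀ ℕ} (hd : d ∈ Q.support) : ∃ m, d = Finsupp.single m 2 := by
  classical
  have hdeg : d.degree = 2 := by
    rw [Finsupp.degree_eq_weight_one]; exact hQ (mem_support_iff.mp hd)
  -- a variable of exponent one survives differentiation
  have hne_one : ∀ i, d i ≠ 1 := by
    intro i hi
    have hle : Finsupp.single i 1 ≤ d := Finsupp.single_le_iff.mpr hi.ge
    have h := coeff_pderiv (i := i) Q (d - Finsupp.single i 1)
    rw [hQ', tsub_add_cancel_of_le hle, Finsupp.tsub_apply, hi, Finsupp.single_eq_same] at h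
    simp only [coeff_zero, tsub_self, Nat.cast_zero, zero_add, mul_one] at h
    exact mem_support_iff.mp hd h.symm
  obtain ⟨m, hm⟩ : ∃ m, d m ≠ 0 := by
    by_contra! h
    simp [show d = 0 from Finsupp.ext h] at hdeg
  have hsplit := congrArg Finsupp.degree (Finsupp.erase_add_single m d)
  rw [map_add, Finsupp.degree_single, hdeg] at hsplit
  have hm2 : d m = 2 := by have := hne_one m; omega
  have herase : d.erase m = 0 := (Finsupp.degree_eq_zero_iff _).mp (by omega)
  exact ⟨m, by rw [← Finsupp.erase_add_single m d, herase, zero_add, hm2]⟩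

section CharTwo

variable [CommSemiring R] [CharP R 2]

theorem pderiv_pderiv_self (i : σ) (f : MvPolynomial σ R) : pderiv i (pderiv i f) = 0 := by
  induction f using MvPolynomial.induction_on with
  | C a => simp
  | add p q hp hq => simp [hp, hq]
  | mul_X p j hp =>
    classical
    rw [pderiv_mul, map_add, pderiv_mul, pderiv_mul, hp, pderiv_X]
    simp only [Pi.single_apply, apply_ite, pderiv_one, map_zero]
    simp [← two_mul, CharTwo.two_eq_zero]

theorem IsHomogeneous.sum_X_mul_pderiv_of_odd [Fintype σ] {φ : MvPolynomial σ R} {n : ℕ}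
    (hφ : φ.IsHomogeneous n) (hn : Odd n) : ∑ i, X i * pderiv i φ = φ := by
  obtain ⟨k, rfl⟩ := hn
  rw [hφ.sum_X_mul_pderiv, nsmul_eq_mul]
  push_cast
  simp [CharTwo.two_eq_zero]

theorem IsHomogeneous.sum_X_mul_pderiv_of_even [Fintype σ] {φ : MvPolynomial σ R} {n : ℕ}
    (hφ : φ.IsHomogeneous n) (hn : Even n) : ∑ i, X i * pderiv i φ = 0 := by
  obtain ⟨k, rfl⟩ := hn
  rw [hφ.sum_X_mul_pderiv, nsmul_eq_mul, ← two_mul]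
  push_cast
  simp [CharTwo.two_eq_zero]

theorem IsHomogeneous.eval_add_of_pderiv_eq_zero {Q : MvPolynomial σ R} (hQ : Q.IsHomogeneous 2)
    (hQ' : ∀ i, pderiv i Q = 0) (x y : σ → R) :
    eval (x + y) Q = eval x Q + eval y Q := by
  simp only [eval_eq, ← Finset.sum_add_distrib]
  refine Finset.sum_congr rfl fun d hd => ?_
  obtain ⟨m, rfl⟩ := hQ.exists_eq_single_two_of_pderiv_eq_zero hQ' hd
  simp [CharTwo.add_sq, mul_add]

end CharTwo

end MvPolynomial

namespace Projectivization

variable {K V : Type*} [Field K] [AddCommGroup V] [Module K V]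

theorem mk_rep_mem_iff {W : Submodule K V} {v : V} (hv : v ≠ 0) :
    (mk K v hv).rep ∈ W ↔ v ∈ W := by
  obtain ⟨a, ha⟩ := exists_smul_eq_mk_rep K v hv
  rw [← ha, Submodule.smul_mem_iff']

theorem infinite_setOf_rep_mem [Infinite K] (W : Submodule K V) (hW : 1 < finrank K W) :
    {q : ℙ K V | q.rep ∈ W}.Infinite := by
  have : Nontrivial W := Module.nontrivial_of_finrank_pos (R := K) (by omega)
  obtain ⟨u, hu⟩ := exists_ne (0 : W)
  obtain ⟨w, hli⟩ := exists_linearIndependent_pair_of_one_lt_finrank hW hu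
  have hpair : ∀ s t : K, s • (u : V) + t • (w : V) = 0 → s = 0 ∧ t = 0 := fun s t h =>
    LinearIndependent.pair_iff.mp hli s t (by rw [← Submodule.coe_eq_zero]; simpa using h)
  have hne : ∀ t : K, (u : V) + t • (w : V) ≠ 0 := fun t h =>
    one_ne_zero (hpair 1 t (by rwa [one_smul])).1
  refine Set.infinite_of_injective_forall_mem (f := fun t => mk K _ (hne t)) (fun t t' h => ?_)
    fun t => (mk_rep_mem_iff (hne t)).mpr (W.add_mem u.2 (W.smul_mem t w.2))
  obtain ⟨a, ha⟩ := (mk_eq_mk_iff' K _ _ (hne t) (hne t')).mp h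
  have := hpair (a - 1) (a * t' - t) (by rw [← sub_eq_zero] at ha; rw [← ha]; module)
  rw [sub_eq_zero, sub_eq_zero] at this
  rw [← this.2, this.1, one_mul]

theorem ncard_setOf_rep_mem_le [FiniteDimensional K V] (W : Submodule K V)
    (hW : finrank K W ≤ 1) : {q : ℙ K V | q.rep ∈ W}.ncard ≤ finrank K W := by
  rcases Nat.le_one_iff_eq_zero_or_eq_one.mp hW with h0 | h1
  · rw [h0, Submodule.finrank_eq_zero.mp h0]
    simp [rep_nonzero]
  · have : Nontrivial W := Module.nontrivial_of_finrank_pos (R := K) (by omega)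
    obtain ⟨u, hu⟩ := exists_ne (0 : W)
    have hu' : (u : V) ≠ 0 := by simpa using hu
    have hsub : {q : ℙ K V | q.rep ∈ W} ⊆ {mk K (u : V) hu'} := by
      intro q hq
      obtain ⟨c, hc⟩ := (finrank_eq_one_iff_of_nonzero' u hu).mp h1 ⟨q.rep, hq⟩
      rw [Set.mem_singleton_iff, ← mk_rep q, mk_eq_mk_iff' K _ _ q.rep_nonzero hu']
      exact ⟨c, congrArg Subtype.val hc⟩
    rw [h1]
    exact (Set.ncard_le_ncard hsub).trans (Set.ncard_singleton _).le

end Projectivization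

namespace MvPolynomial.IsHomogeneous

open Projectivization

variable {K σ : Type*} [Field K] [Fintype σ] {φ : MvPolynomial σ K} {n : ℕ}

theorem eval_mk_rep_eq_zero_iff (hφ : φ.IsHomogeneous n) {v : σ → K} (hv : v ≠ 0) :
    eval (mk K v hv).rep φ = 0 ↔ eval v φ = 0 := by
  obtain ⟨a, ha⟩ := exists_smul_eq_mk_rep K v hv
  rw [← ha, Units.smul_def, hφ.eval_smul, mul_eq_zero_iff_left (pow_ne_zero _ a.ne_zero)]

end MvPolynomial.IsHomogeneous

theorem Nat.two_pow_add_le_two_pow {a b c : ℕ} (h : a + b ≤ c) (hb : b ≤ 1) :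
    2 ^ a + b ≤ 2 ^ c := by
  have hc := Nat.pow_le_pow_right two_pos h
  have := Nat.one_le_two_pow (n := a)
  rw [pow_add] at hc
  interval_cases b <;> omega

section Descent

variable {k K M ι : Type*} [Field k] [Field K] [Algebra k K] [AddCommGroup M] [Module K M]
  [Module k M] [IsScalarTower k K M] {σ : K →+* K} (T : M →ₛₗ[σ] M)
  (hσ : ∀ a, σ a = a → a ∈ Set.range (algebraMap k K))
include hσ

theorem LinearIndependent.of_restrictScalars_of_map_eq_self {v : ι → M}
    (hv : LinearIndependent k v) (hfix : ∀ i, T (v i) = v i) : LinearIndependent K v := by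
  classical
  rw [linearIndependent_iff']
  intro s
  induction s using Finset.strongInduction with
  | H s ih =>
  intro g hg i₀ hi₀
  by_contra hgi₀
  set g' : ι → K := fun i => (g i₀)⁻¹ * g i with hg'_def
  have hg' : ∑ i ∈ s, g' i • v i = 0 := by
    simp only [hg'_def, mul_smul, ← Finset.smul_sum, hg, smul_zero]
  have hg'i₀ : g' i₀ = 1 := inv_mul_cancel₀ hgi₀
  -- applying `T` and subtracting kills the coefficient at `i₀`
  have hdiff : ∑ i ∈ s.erase i₀, (σ (g' i) - g' i) • v i = 0 := by
    rw [Finset.sum_erase _ (by simp [hg'i₀])]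
    have h := congrArg T hg'
    simp only [map_sum, map_smulₛₗ, hfix, map_zero] at h
    simp only [sub_smul, Finset.sum_sub_distrib, h, hg', sub_zero]
  have hfixed : ∀ i ∈ s, σ (g' i) = g' i := by
    intro i hi
    rcases eq_or_ne i i₀ with rfl | hne
    · simp [hg'i₀]
    · exact sub_eq_zero.mp <|
        ih _ (Finset.erase_ssubset hi₀) _ hdiff i (Finset.mem_erase.mpr ⟨hne, hi⟩)
  choose! a ha using fun i hi => hσ _ (hfixed i hi)
  have hrel : ∑ i ∈ s, a i • v i = 0 := by
    rw [← hg']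
    exact Finset.sum_congr rfl fun i hi => by rw [← algebraMap_smul K, ha i hi]
  have := linearIndependent_iff'.mp hv s a hrel i₀ hi₀
  rw [← ha i₀ hi₀, this, map_zero] at hg'i₀
  exact zero_ne_one hg'i₀

theorem encard_setOf_map_eq_self_le [FiniteDimensional K M] [Finite k] (W : Submodule K M)
    (hW : ∀ x, T x = x → x ∈ W) : {x | T x = x}.encard ≤ (Nat.card k ^ finrank K W : ℕ) := by
  obtain ⟨b, hb, hspan, hli⟩ := exists_linearIndependent k {x | T x = x}
  have hliK := hli.of_restrictScalars_of_map_eq_self T hσ fun x => hb x.2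
  have : Fintype b := @Fintype.ofFinite _ hliK.finite
  have : Module.Finite k (Submodule.span k b) := FiniteDimensional.span_of_finite k b.toFinite
  have : Finite (Submodule.span k b) := Module.finite_of_finite k
  have hbW : finrank K (Submodule.span K b) ≤ finrank K W :=
    Submodule.finrank_mono (Submodule.span_le.mpr fun x hx => hW x (hb hx))
  rw [← Subtype.range_coe (s := b), finrank_span_eq_card hliK] at hbW
  calc {x | T x = x}.encard
      ≤ (Submodule.span k b : Set M).encard := by
        rw [hspan]; exact Set.encard_le_encard Submodule.subset_span
    _ = (Nat.card k ^ Fintype.card b : ℕ) := by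
        rw [← (Set.toFinite _).cast_ncard_eq, ← Nat.card_coe_set_eq, SetLike.coe_sort_coe,
          Module.natCard_eq_pow_finrank (K := k), ← finrank_span_eq_card hli, Subtype.range_coe]
    _ ≤ (Nat.card k ^ finrank K W : ℕ) := by
        exact_mod_cast Nat.pow_le_pow_right Nat.card_pos hbW

end Descent

section Semilinear

variable {K V ι : Type*} [Field K] [AddCommGroup V] [Module K V] {σ : K →+* K}
  (T : V →ₛₗ[σ] V) (b : Basis ι K V)

theorem LinearMap.apply_mem_span_range_comp [Fintype ι] (x : V) :
    T x ∈ Submodule.span K (Set.range (T ∘ b)) := by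
  rw [← b.sum_repr x, map_sum]
  exact Submodule.sum_mem _ fun i _ => by
    rw [map_smulₛₗ]; exact Submodule.smul_mem _ _ (Submodule.subset_span ⟨i, rfl⟩)

theorem LinearMap.finrank_span_range_comp_lt [Fintype ι] (hT : LinearMap.ker T ≠ ⊥) :
    finrank K (Submodule.span K (Set.range (T ∘ b))) < Fintype.card ι := by
  obtain ⟨u, hTu, hu⟩ := (Submodule.ne_bot_iff _).mp hT
  rw [LinearMap.mem_ker] at hTu
  refine (finrank_range_le_card _).lt_of_ne fun h => ?_
  have hli := linearIndependent_iff_card_eq_finrank_span.mpr h.symm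
  obtain ⟨i, hi⟩ := Finsupp.ne_iff.mp (b.repr.map_ne_zero_iff.mpr hu)
  have hrel : ∑ j, σ (b.repr u j) • (T ∘ b) j = 0 := by
    conv_rhs => rw [← hTu, ← b.sum_repr u, map_sum]
    simp only [map_smulₛₗ, Function.comp_apply]
  exact hi (σ.injective (by
    simpa using linearIndependent_iff'.mp hli _ _ hrel i (Finset.mem_univ i)))

end Semilinear

section Eigenlines

open Projectivization

variable {K V : Type*} [Field K] [AddCommGroup V] [Module K V]

def eigenlines {σ : K →+* K} (T : V →ₛₗ[σ] V) : Set (ℙ K V) :=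
  {q | ∃ c : K, T q.rep = c • q.rep}

variable [CharP K 2]

theorem mem_range_algebraMap_of_frobenius_eq_self [Algebra (ZMod 2) K] {a : K}
    (h : frobenius K 2 a = a) :
    a ∈ Set.range (algebraMap (ZMod 2) K) := by
  have h' : a * (a - 1) = 0 := by rw [mul_sub, mul_one, ← sq, ← frobenius_def, h, sub_self]
  rcases mul_eq_zero.mp h' with rfl | h1
  exacts [⟨0, map_zero _⟩, ⟨1, (map_one _).trans (sub_eq_zero.mp h1).symm⟩]

theorem encard_setOf_frobenius_fixed_le {ι : Type*} [Fintype ι]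
    (T : (ι → K) →ₛₗ[frobenius K 2] (ι → K)) (W : Submodule K (ι → K))
    (hW : ∀ x, T x = x → x ∈ W) : {x | T x = x}.encard ≤ (2 ^ finrank K W : ℕ) := by
  let := ZMod.algebra K 2
  simpa using encard_setOf_map_eq_self_le T (fun _ => mem_range_algebraMap_of_frobenius_eq_self)
    W hW

theorem ncard_eigenlines_sdiff_ker_le (T : V →ₛₗ[frobenius K 2] V)
    (hfin : {x | T x = x}.Finite) :
    (eigenlines T \ {q | q.rep ∈ LinearMap.ker T}).ncard ≤ {x | T x = x}.ncard - 1 := by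
  rw [← Set.ncard_sdiff_singleton_of_mem (show (0 : V) ∈ {x | T x = x} from map_zero T),
    ← Set.ncard_image_of_injective _ submodule_injective]
  refine (Set.ncard_le_ncard (t := (fun x => K ∙ x) '' ({x | T x = x} \ {0})) ?_
    (hfin.sdiff.image _)).trans (Set.ncard_image_le hfin.sdiff)
  rintro _ ⟨q, ⟨⟨c, hc⟩, hqN⟩, rfl⟩
  have hc0 : c ≠ 0 := by rintro rfl; exact hqN (LinearMap.mem_ker.mpr (by simpa using hc))
  -- the eigenline `T v = c • v` contains the fixed vector `c⁻¹ • v`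
  refine ⟨c⁻¹ • q.rep, ⟨?_, by simp [hc0, q.rep_nonzero]⟩, ?_⟩
  · change T _ = _
    rw [map_smulₛₗ, hc, frobenius_def, smul_smul]
    congr 1
    field_simp
  · conv_rhs => rw [← mk_rep q, submodule_mk]
    exact Submodule.span_singleton_smul_eq (inv_ne_zero hc0).isUnit _

theorem ncard_eigenlines_le {ι : Type*} [Fintype ι] [Infinite K]
    (T : (ι → K) →ₛₗ[frobenius K 2] (ι → K)) (hfin : (eigenlines T).Finite) :
    (eigenlines T).ncard ≤ 2 ^ Fintype.card ι - 1 := by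
  set N := LinearMap.ker T
  set W := Submodule.span K (Set.range (T ∘ Pi.basisFun K ι))
  have hFix := encard_setOf_frobenius_fixed_le T W fun x hx =>
    hx ▸ T.apply_mem_span_range_comp _ x
  have hFix_fin := Set.finite_of_encard_le_coe hFix
  rw [← hFix_fin.cast_ncard_eq, Nat.cast_le] at hFix
  have hPN : {q : ℙ K (ι → K) | q.rep ∈ N} ⊆ eigenlines T := fun q hq =>
    ⟨0, by simpa using LinearMap.mem_ker.mp hq⟩
  have hN : finrank K N ≤ 1 := by
    by_contra! h
    exact infinite_setOf_rep_mem N h (hfin.subset hPN)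
  have hW : finrank K W + finrank K N ≤ Fintype.card ι := by
    rcases Nat.le_one_iff_eq_zero_or_eq_one.mp hN with h0 | h1
    · rw [h0]; exact finrank_range_le_card _
    · have : finrank K W < Fintype.card ι :=
        T.finrank_span_range_comp_lt (Pi.basisFun K ι) fun h => by
          rw [show N = ⊥ from h, finrank_bot] at h1; exact zero_ne_one h1
      omega
  have hpow := Nat.two_pow_add_le_two_pow hW hN
  calc (eigenlines T).ncard
      = (eigenlines T \ {q | q.rep ∈ N}).ncard + {q : ℙ K (ι → K) | q.rep ∈ N}.ncard :=
        (Set.ncard_sdiff_add_ncard_of_subset hPN hfin).symm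
    _ ≤ ({x | T x = x}.ncard - 1) + finrank K N :=
        add_le_add (ncard_eigenlines_sdiff_ker_le T hFix_fin) (ncard_setOf_rep_mem_le N hN)
    _ ≤ 2 ^ Fintype.card ι - 1 := by
        have := Nat.one_le_two_pow (n := finrank K W)
        omega

end Eigenlines

section CrossHessian

variable {R : Type*} [CommRing R]

noncomputable def crossHessian (B : MvPolynomial (Fin 3) R) : Fin 3 → MvPolynomial (Fin 3) R :=
  ![pderiv 1 (pderiv 2 B), pderiv 2 (pderiv 0 B), pderiv 0 (pderiv 1 B)]

variable {B : MvPolynomial (Fin 3) R} {n : ℕ}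

theorem isHomogeneous_crossHessian (hB : B.IsHomogeneous (n + 2)) (k : Fin 3) :
    (crossHessian B k).IsHomogeneous n := by
  fin_cases k <;> simpa [crossHessian] using hB.pderiv.pderiv

variable [CharP R 2]

theorem pderiv_eq_cross_crossHessian (hB : B.IsHomogeneous (n + 1)) (hn : Odd n)
    (i : Fin 3) :
    pderiv i B = crossProduct (fun j => X j) (crossHessian B) i := by
  have h := (hB.pderiv (i := i)).sum_X_mul_pderiv_of_odd (by simpa using hn)
  rw [Fin.sum_univ_three] at h
  fin_cases i <;>
    simp [cross_apply, crossHessian, CharTwo.sub_eq_add, pderiv_pderiv_self] at h ⊢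
  · linear_combination -h + X 1 * pderiv_comm 1 0 B
  · linear_combination -h + X 2 * pderiv_comm 2 1 B
  · linear_combination -h + X 0 * pderiv_comm 0 2 B

theorem pderiv_crossHessian (hB : B.IsHomogeneous (n + 2)) (hn : Even n) (j k : Fin 3) :
    pderiv j (crossHessian B k) = 0 := by
  have hdeg := isHomogeneous_crossHessian hB k
  have hother : ∀ j ≠ k, pderiv j (crossHessian B k) = 0 := by
    intro j hj
    fin_cases k <;> fin_cases j <;> simp_all [crossHessian, pderiv_pderiv_self] <;>
      rw [pderiv_comm, pderiv_pderiv_self, map_zero]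
  have hself : pderiv k (crossHessian B k) = 0 := by
    have h := hdeg.sum_X_mul_pderiv_of_even hn
    rw [Finset.sum_eq_single k (fun j _ hj => by rw [hother j hj, mul_zero]) (by simp)] at h
    rwa [← mul_zero (X k), X_mul_cancel_left_iff] at h
  rcases eq_or_ne j k with rfl | hj
  exacts [hself, hother j hj]

end CrossHessian

section Critical

open Projectivization

variable {K : Type*} [Field K]

def criticalLocus {σ : Type*} (B : MvPolynomial σ K) : Set (ℙ K (σ → K)) :=
  {q | ∀ i, eval q.rep (pderiv i B) = 0}

variable [CharP K 2] {B : MvPolynomial (Fin 3) K}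

noncomputable def crossHessianMap (hB : B.IsHomogeneous 4) :
    (Fin 3 → K) →ₛₗ[frobenius K 2] (Fin 3 → K) where
  toFun x k := eval x (crossHessian B k)
  map_add' x y := funext fun k => by
    rw [Pi.add_apply]
    exact (isHomogeneous_crossHessian (n := 2) hB k).eval_add_of_pderiv_eq_zero
      (fun i => pderiv_crossHessian (n := 2) hB even_two i k) x y
  map_smul' c x := funext fun k => by
    rw [Pi.smul_apply, smul_eq_mul, frobenius_def,
      (isHomogeneous_crossHessian (n := 2) hB k).eval_smul]

theorem criticalLocus_eq_eigenlines (hB : B.IsHomogeneous 4) :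
    criticalLocus B = eigenlines (crossHessianMap hB) := by
  ext q
  set T := crossHessianMap hB
  have hgrad : ∀ i, eval q.rep (pderiv i B) = crossProduct q.rep (T q.rep) i := by
    intro i
    rw [pderiv_eq_cross_crossHessian (n := 3) hB (by decide)]
    fin_cases i <;> simp [cross_apply, T, crossHessianMap]
  calc q ∈ criticalLocus B ↔ crossProduct q.rep (T q.rep) = 0 := by
        simp [criticalLocus, funext_iff, hgrad]
    _ ↔ q ∈ eigenlines T := by
        rw [← not_ne_iff, crossProduct_ne_zero_iff_linearIndependent,
          LinearIndependent.pair_iff' q.rep_nonzero]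
        simp [eigenlines, eq_comm]

end Critical

theorem Fin.snoc_ne_zero_of_ne_zero {M : Type*} [Zero M] {n : ℕ} {x : Fin n → M} (hx : x ≠ 0)
    (z : M) : (Fin.snoc x z : Fin (n + 1) → M) ≠ 0 :=
  fun h => hx (funext fun i => by simpa using congrFun h i.castSucc)

section Surface

open Projectivization

variable {K : Type*} [Field K] {n : ℕ}

def singularLocus {σ : Type*} (F : MvPolynomial σ K) : Set (ℙ K (σ → K)) :=
  {p | eval p.rep F = 0 ∧ ∀ i, eval p.rep (pderiv i F) = 0}

noncomputable def quarticCover (B : MvPolynomial (Fin n) K) : MvPolynomial (Fin (n + 1)) K :=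
  X (Fin.last n) ^ 4 + rename Fin.castSucc B

variable {B : MvPolynomial (Fin n) K}

section CharTwo

variable [CharP K 2]

theorem CharTwo.pow_four_injective : Function.Injective fun a : K => a ^ 4 :=
  fun a b h => iterateFrobenius_inj K 2 2 (by simpa [iterateFrobenius_def] using h)

theorem mk_snoc_mem_singularLocus_quarticCover_iff (hB : B.IsHomogeneous 4) {x : Fin n → K}
    {z : K} (hxz : (Fin.snoc x z : Fin (n + 1) → K) ≠ 0) :
    mk K (Fin.snoc x z) hxz ∈ singularLocus (quarticCover B) ↔
      z ^ 4 = eval x B ∧ ∀ i, eval x (pderiv i B) = 0 := by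
  have hF : (quarticCover B).IsHomogeneous 4 :=
    (isHomogeneous_X_pow _ 4).add hB.rename_isHomogeneous
  have hlast : pderiv (Fin.last n) (rename Fin.castSucc B) = 0 := by
    classical
    refine pderiv_eq_zero_of_notMem_vars fun h => ?_
    obtain ⟨i, -, hi⟩ := Finset.mem_image.mp (vars_rename _ _ h)
    exact Fin.castSucc_ne_last i hi
  have hX : ∀ i, pderiv i (X (Fin.last n) ^ 4 : MvPolynomial (Fin (n + 1)) K) = 0 := by
    intro i
    rw [pderiv_pow, show ((4 : ℕ) : MvPolynomial (Fin (n + 1)) K) = 2 * 2 by norm_num,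
      CharTwo.two_eq_zero, zero_mul, zero_mul, zero_mul]
  change (_ ∧ ∀ i, _) ↔ _
  rw [hF.eval_mk_rep_eq_zero_iff,
    forall_congr' fun i => (hF.pderiv (i := i)).eval_mk_rep_eq_zero_iff hxz, Fin.forall_fin_succ']
  simp [quarticCover, hX, hlast, pderiv_rename (Fin.castSucc_injective n), eval_rename,
    Fin.snoc_comp_castSucc, CharTwo.add_eq_zero]

end CharTwo

variable [IsAlgClosed K]

variable (K) in
noncomputable def quarticRoot (a : K) : K :=
  (IsAlgClosed.exists_pow_nat_eq a four_pos).choose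

variable (B) in
noncomputable def quarticLift (q : ℙ K (Fin n → K)) : ℙ K (Fin (n + 1) → K) :=
  mk K (Fin.snoc q.rep (quarticRoot K (eval q.rep B)))
    (Fin.snoc_ne_zero_of_ne_zero q.rep_nonzero _)

theorem quarticLift_injective : Function.Injective (quarticLift (K := K) B) := by
  intro q q' h
  obtain ⟨a, ha⟩ := (mk_eq_mk_iff' K _ _ _ _).mp h
  rw [← mk_rep q, ← mk_rep q', mk_eq_mk_iff']
  exact ⟨a, funext fun i => by simpa using congrFun ha i.castSucc⟩

variable [CharP K 2]

theorem quarticRoot_eq_iff {a z : K} : quarticRoot K a = z ↔ z ^ 4 = a := by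
  have h : quarticRoot K a ^ 4 = a := (IsAlgClosed.exists_pow_nat_eq a four_pos).choose_spec
  exact ⟨fun h' => h' ▸ h, fun hz => CharTwo.pow_four_injective (h.trans hz.symm)⟩

theorem quarticLift_mk (hB : B.IsHomogeneous 4) {x : Fin n → K} (hx : x ≠ 0) :
    quarticLift B (mk K x hx) =
      mk K (Fin.snoc x (quarticRoot K (eval x B))) (Fin.snoc_ne_zero_of_ne_zero hx _) := by
  obtain ⟨a, ha⟩ := exists_smul_eq_mk_rep K x hx
  rw [quarticLift, mk_eq_mk_iff]
  refine ⟨a, funext fun i => ?_⟩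
  rw [← ha]
  refine Fin.lastCases ?_ (fun j => ?_) i
  · simp only [Pi.smul_apply, Fin.snoc_last, Units.smul_def, smul_eq_mul]
    rw [eq_comm, quarticRoot_eq_iff, hB.eval_smul, mul_pow, quarticRoot_eq_iff.mp rfl]
  · simp [Fin.snoc_castSucc]

theorem quarticLift_image_criticalLocus (hB : B.IsHomogeneous 4) :
    quarticLift B '' criticalLocus B = singularLocus (quarticCover B) := by
  ext p
  constructor
  · rintro ⟨q, hq, rfl⟩
    exact (mk_snoc_mem_singularLocus_quarticCover_iff hB _).mpr
      ⟨quarticRoot_eq_iff.mp rfl, hq⟩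
  · intro hp
    set x : Fin n → K := Fin.init p.rep
    set z := p.rep (Fin.last n)
    have hrep : Fin.snoc x z = p.rep := Fin.snoc_init_self _
    have hxz : (Fin.snoc x z : Fin (n + 1) → K) ≠ 0 := hrep ▸ p.rep_nonzero
    have hmk : mk K (Fin.snoc x z) hxz = p := by
      conv_rhs => rw [← mk_rep p]
      congr 1
    obtain ⟨hz, hcrit⟩ := (mk_snoc_mem_singularLocus_quarticCover_iff hB hxz).mp (hmk ▸ hp)
    have hx : x ≠ 0 := by
      rintro hx0
      have hB0 : eval (0 : Fin n → K) B = 0 := by simpa using hB.eval_smul 0 0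
      have hz0 : z = 0 := pow_eq_zero_iff four_ne_zero |>.mp (by rw [hz, hx0, hB0])
      exact hxz (funext fun i => Fin.lastCases (by simp [hz0]) (fun j => by simp [hx0]) i)
    refine ⟨mk K x hx, fun i => (hB.pderiv.eval_mk_rep_eq_zero_iff hx).mpr (hcrit i), ?_⟩
    rw [quarticLift_mk hB hx, ← hmk]
    congr 2
    exact quarticRoot_eq_iff.mpr hz

end Surface

/-- the normal quartic `X = {z⁴ + B(x₁,x₂,x₃) = 0} ⊂ ℙ³` in characteristic 2
has at most 7 singular points. -/
theorem stmt_12 (K : Type*) [Field K] [IsAlgClosed K] [CharP K 2]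
    (B : MvPolynomial (Fin 3) K) (hB : B.IsHomogeneous 4)
    (F : MvPolynomial (Fin 4) K)
    (hF : F = X 3 ^ 4 + rename (Fin.castSucc : Fin 3 → Fin 4) B)
    (hfin : {p : Projectivization K (Fin 4 → K) |
        eval p.rep F = 0 ∧ ∀ i, eval p.rep (pderiv i F) = 0}.Finite) :
    {p : Projectivization K (Fin 4 → K) |
        eval p.rep F = 0 ∧ ∀ i, eval p.rep (pderiv i F) = 0}.ncard ≤ 7 := by
  obtain rfl : F = quarticCover B := hF
  change (singularLocus (quarticCover B)).Finite at hfin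
  change (singularLocus (quarticCover B)).ncard ≤ 7
  rw [← quarticLift_image_criticalLocus hB, criticalLocus_eq_eigenlines hB] at hfin ⊢
  rw [Set.ncard_image_of_injective _ quarticLift_injective]
  simpa using ncard_eigenlines_le _ (hfin.of_finite_image quarticLift_injective.injOn)
end

section
/- Let K be an algebraically closed field of characteristic 2 and β ∈ K, β ≠ 0. The quartic surface X = {σ₄ + βσ₂² = 0} ⊂ ℙ³(K) has exactly 4 singular points, the four coordinate points, and at each of them the local equation in affine coordinates is (x₂+x₃+x₄)² + x₂x₃x₄ + (x₂x₃+x₂x₄+x₃x₄)² = 0, a uniplanar double point (the quadratic part of the local equation is the square of a linear form). -/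
open MvPolynomial

/-- The quadratic part of the Taylor expansion of `F` at the point `v`. -/
noncomputable def quadPart {K : Type*} [Field K] (F : MvPolynomial (Fin 4) K)
    (v : Fin 4 → K) : MvPolynomial (Fin 4) K :=
  homogeneousComponent 2 (aeval (fun i => X i + C (v i)) F)

section Aux
variable {K : Type*} [Field K]

private lemma esymm4_eq : esymm (Fin 4) K 4 = X 0 * X 1 * X 2 * X 3 := by
  rw [esymm, show Finset.powersetCard 4 (Finset.univ : Finset (Fin 4)) = {Finset.univ} from by
    decide]
  simp [Fin.prod_univ_four]

private lemma esymm2_eq : esymm (Fin 4) K 2 =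
    X 0 * X 1 + X 0 * X 2 + X 0 * X 3 + X 1 * X 2 + X 1 * X 3 + X 2 * X 3 := by
  rw [esymm, show Finset.powersetCard 2 (Finset.univ : Finset (Fin 4)) =
    {{0,1},{0,2},{0,3},{1,2},{1,3},{2,3}} from by decide]
  rw [show ({{0,1},{0,2},{0,3},{1,2},{1,3},{2,3}} : Finset (Finset (Fin 4))) =
    insert {0,1} (insert {0,2} (insert {0,3} (insert {1,2} (insert {1,3}
      ({{2,3}} : Finset (Finset (Fin 4)))))) ) from rfl]
  rw [Finset.sum_insert (by decide), Finset.sum_insert (by decide),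
    Finset.sum_insert (by decide), Finset.sum_insert (by decide),
    Finset.sum_insert (by decide), Finset.sum_singleton]
  rw [Finset.prod_insert (by decide), Finset.prod_insert (by decide),
    Finset.prod_insert (by decide), Finset.prod_insert (by decide),
    Finset.prod_insert (by decide), Finset.prod_insert (by decide)]
  simp [Finset.prod_singleton]
  ring

private lemma coord_case (v : Fin 4 → K) (hv : v ≠ 0)
    (h0 : v 1 * v 2 * v 3 = 0) (h1 : v 0 * v 2 * v 3 = 0)
    (h2 : v 0 * v 1 * v 3 = 0) (h3 : v 0 * v 1 * v 2 = 0)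
    (hs : v 0 * v 1 + v 0 * v 2 + v 0 * v 3 + v 1 * v 2 + v 1 * v 3 + v 2 * v 3 = 0) :
    ∃ (i : Fin 4) (t : K), t ≠ 0 ∧ v = t • (Pi.single i 1 : Fin 4 → K) := by
  have H : ∀ (i : Fin 4), v i ≠ 0 → (∀ j, j ≠ i → v j = 0) →
      ∃ (i : Fin 4) (t : K), t ≠ 0 ∧ v = t • (Pi.single i 1 : Fin 4 → K) := by
    intro i hi hz
    refine ⟨i, v i, hi, funext fun j => ?_⟩
    rcases eq_or_ne j i with rfl | hj
    · simp
    · simp [Pi.single_apply, hj, hz j hj]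
  by_cases e0 : v 0 = 0 <;> by_cases e1 : v 1 = 0 <;> by_cases e2 : v 2 = 0 <;>
    by_cases e3 : v 3 = 0
  · exact absurd (show v = 0 by funext j; fin_cases j <;> assumption) hv
  · exact H 3 e3 (fun j hj => by fin_cases j <;> simp_all)
  · exact H 2 e2 (fun j hj => by fin_cases j <;> simp_all)
  · exfalso; simp_all [mul_eq_zero]
  · exact H 1 e1 (fun j hj => by fin_cases j <;> simp_all)
  · exfalso; simp_all [mul_eq_zero]
  · exfalso; simp_all [mul_eq_zero]
  · exfalso; simp_all [mul_eq_zero]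
  · exact H 0 e0 (fun j hj => by fin_cases j <;> simp_all)
  · exfalso; simp_all [mul_eq_zero]
  · exfalso; simp_all [mul_eq_zero]
  · exfalso; simp_all [mul_eq_zero]
  · exfalso; simp_all [mul_eq_zero]
  · exfalso; simp_all [mul_eq_zero]
  · exfalso; simp_all [mul_eq_zero]
  · exfalso; simp_all [mul_eq_zero]

variable [CharP K 2]

private lemma pderiv_sq (s : MvPolynomial (Fin 4) K) (i : Fin 4) : pderiv i (s ^ 2) = 0 := by
  rw [sq, pderiv_mul, mul_comm, ← two_mul, CharTwo.two_eq_zero, zero_mul]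

private lemma quad_core [IsAlgClosed K] {β t : K} (hβ : β ≠ 0) (ht : t ≠ 0) {v : Fin 4 → K}
    {L Q3 : MvPolynomial (Fin 4) K}
    (hL1 : L.IsHomogeneous 1) (hL0 : L ≠ 0) (hQ3 : Q3.IsHomogeneous 3)
    (hsubP : aeval (fun k => X k + C (v k)) (X 0 * X 1 * X 2 * X 3 : MvPolynomial (Fin 4) K)
      = X 0 * X 1 * X 2 * X 3 + C t * Q3)
    (hsubS : aeval (fun k => X k + C (v k))
        (X 0 * X 1 + X 0 * X 2 + X 0 * X 3 + X 1 * X 2 + X 1 * X 3 + X 2 * X 3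
          : MvPolynomial (Fin 4) K)
      = (X 0 * X 1 + X 0 * X 2 + X 0 * X 3 + X 1 * X 2 + X 1 * X 3 + X 2 * X 3) + C t * L) :
    ∃ ℓ : MvPolynomial (Fin 4) K, ℓ.IsHomogeneous 1 ∧ ℓ ≠ 0 ∧
      homogeneousComponent 2 (aeval (fun k => X k + C (v k))
        ((X 0 * X 1 * X 2 * X 3 : MvPolynomial (Fin 4) K) +
          C β * (X 0 * X 1 + X 0 * X 2 + X 0 * X 3 + X 1 * X 2 + X 1 * X 3 + X 2 * X 3) ^ 2))
      = ℓ ^ 2 := by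
  set S : MvPolynomial (Fin 4) K :=
    X 0 * X 1 + X 0 * X 2 + X 0 * X 3 + X 1 * X 2 + X 1 * X 3 + X 2 * X 3 with hS
  set P : MvPolynomial (Fin 4) K := X 0 * X 1 * X 2 * X 3 with hP
  have hXh : ∀ j : Fin 4, (X j : MvPolynomial (Fin 4) K).IsHomogeneous 1 :=
    fun j => isHomogeneous_X K j
  have hP4 : P.IsHomogeneous 4 := by
    have h := (((hXh 0).mul (hXh 1)).mul (hXh 2)).mul (hXh 3)
    norm_num at h
    exact h
  have hS2 : S.IsHomogeneous 2 := by
    have h := (((((((hXh 0).mul (hXh 1)).add ((hXh 0).mul (hXh 2))).add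
      ((hXh 0).mul (hXh 3))).add ((hXh 1).mul (hXh 2))).add
      ((hXh 1).mul (hXh 3))).add ((hXh 2).mul (hXh 3)))
    norm_num at h
    exact h
  have hsub : aeval (fun k => X k + C (v k)) (P + C β * S ^ 2)
      = (P + C t * Q3 + C β * S ^ 2) + C β * (C t * L) ^ 2 := by
    rw [map_add, hsubP, map_mul, map_pow, hsubS, aeval_C, algebraMap_eq, CharTwo.add_sq]
    ring
  have key : homogeneousComponent 2 (aeval (fun k => X k + C (v k)) (P + C β * S ^ 2))
      = C β * (C t * L) ^ 2 := by
    rw [hsub, map_add, map_add, map_add]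
    have c1 : homogeneousComponent 2 P = 0 := by
      rw [homogeneousComponent_of_mem ((mem_homogeneousSubmodule 4 P).2 hP4)]
      norm_num
    have c2 : homogeneousComponent 2 (C t * Q3) = 0 := by
      have h : (C t * Q3).IsHomogeneous 3 := by
        have := (isHomogeneous_C (Fin 4) t).mul hQ3
        norm_num at this; exact this
      rw [homogeneousComponent_of_mem ((mem_homogeneousSubmodule 3 _).2 h)]
      norm_num
    have c3 : homogeneousComponent 2 (C β * S ^ 2) = 0 := by
      have h : (C β * S ^ 2).IsHomogeneous 4 := by
        have := (isHomogeneous_C (Fin 4) β).mul (hS2.pow 2)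
        norm_num at this; exact this
      rw [homogeneousComponent_of_mem ((mem_homogeneousSubmodule 4 _).2 h)]
      norm_num
    have c4 : homogeneousComponent 2 (C β * (C t * L) ^ 2) = C β * (C t * L) ^ 2 := by
      have h : (C β * (C t * L) ^ 2).IsHomogeneous 2 := by
        have := (isHomogeneous_C (Fin 4) β).mul
          (((isHomogeneous_C (Fin 4) t).mul hL1).pow 2)
        norm_num at this; exact this
      rw [homogeneousComponent_of_mem ((mem_homogeneousSubmodule 2 _).2 h)]
      norm_num
    rw [c1, c2, c3, c4]
    ring
  obtain ⟨c, hc⟩ := IsAlgClosed.exists_pow_nat_eq (β * t ^ 2) (n := 2) (by norm_num)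
  have hc0 : c ≠ 0 := by
    intro h
    rw [h] at hc
    exact (mul_ne_zero hβ (pow_ne_zero 2 ht)) (by simpa using hc.symm)
  refine ⟨C c * L, ?_, mul_ne_zero (fun h => hc0 (by simpa using h)) hL0, ?_⟩
  · have := (isHomogeneous_C (Fin 4) c).mul hL1
    norm_num at this; exact this
  · rw [key, mul_pow, mul_pow, ← C_pow, ← C_pow, ← mul_assoc, ← C_mul, hc]

end Aux

set_option maxHeartbeats 1600000 in
/-- for `β ≠ 0` in an algebraically closed field of characteristic 2, the
quartic `X = {σ₄ + βσ₂² = 0} ⊂ ℙ³` has exactly 4 singular points, the four coordinate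
points, and each is a uniplanar double point: the quadratic part of the local equation is
the square of a (nonzero) linear form. -/
theorem stmt_17 (K : Type*) [Field K] [IsAlgClosed K] [CharP K 2]
    (β : K) (hβ : β ≠ 0) (F : MvPolynomial (Fin 4) K)
    (hF : F = esymm (Fin 4) K 4 + C β * (esymm (Fin 4) K 2) ^ 2) :
    {p : Projectivization K (Fin 4 → K) |
        eval p.rep F = 0 ∧ ∀ i, eval p.rep (pderiv i F) = 0} =
      {p : Projectivization K (Fin 4 → K) |
        ∃ (i : Fin 4) (t : K), t ≠ 0 ∧ p.rep = t • (Pi.single i 1 : Fin 4 → K)} ∧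
    {p : Projectivization K (Fin 4 → K) |
        eval p.rep F = 0 ∧ ∀ i, eval p.rep (pderiv i F) = 0}.ncard = 4 ∧
    ∀ p : Projectivization K (Fin 4 → K),
      (eval p.rep F = 0 ∧ ∀ i, eval p.rep (pderiv i F) = 0) →
        ∃ ℓ : MvPolynomial (Fin 4) K, ℓ.IsHomogeneous 1 ∧ ℓ ≠ 0 ∧
          quadPart F p.rep = ℓ ^ 2 := by
  have hF' : F = X 0 * X 1 * X 2 * X 3 +
      C β * (X 0 * X 1 + X 0 * X 2 + X 0 * X 3 + X 1 * X 2 + X 1 * X 3 + X 2 * X 3) ^ 2 := by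
    rw [hF, esymm4_eq, esymm2_eq]
  clear hF
  subst hF'
  set S : MvPolynomial (Fin 4) K :=
    X 0 * X 1 + X 0 * X 2 + X 0 * X 3 + X 1 * X 2 + X 1 * X 3 + X 2 * X 3 with hS
  set P : MvPolynomial (Fin 4) K := X 0 * X 1 * X 2 * X 3 with hP
  -- derivatives
  have hder : ∀ i : Fin 4, pderiv i (P + C β * S ^ 2) =
      ![X 1 * X 2 * X 3, X 0 * X 2 * X 3, X 0 * X 1 * X 3, X 0 * X 1 * X 2] i := by
    intro i
    rw [map_add, pderiv_C_mul, pderiv_sq, mul_zero, add_zero, hP]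
    fin_cases i <;> simp [pderiv_mul, pderiv_X] <;> ring
  -- the key pointwise equivalence
  have key : ∀ v : Fin 4 → K, v ≠ 0 →
      ((eval v (P + C β * S ^ 2) = 0 ∧ ∀ i, eval v (pderiv i (P + C β * S ^ 2)) = 0) ↔
        ∃ (i : Fin 4) (t : K), t ≠ 0 ∧ v = t • (Pi.single i 1 : Fin 4 → K)) := by
    intro v hv
    constructor
    · rintro ⟨he, hd⟩
      have t0 : v 1 * v 2 * v 3 = 0 := by
        have := hd 0; rw [hder 0] at this; simpa using this
      have t1 : v 0 * v 2 * v 3 = 0 := by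
        have := hd 1; rw [hder 1] at this; simpa using this
      have t2 : v 0 * v 1 * v 3 = 0 := by
        have := hd 2; rw [hder 2] at this; simpa using this
      have t3 : v 0 * v 1 * v 2 = 0 := by
        have := hd 3; rw [hder 3] at this; simpa using this
      have hs : v 0 * v 1 + v 0 * v 2 + v 0 * v 3 + v 1 * v 2 + v 1 * v 3 + v 2 * v 3 = 0 := by
        rw [hP, hS] at he
        simp only [map_add, map_mul, map_pow, eval_X, eval_C] at he
        have h4 : v 0 * v 1 * v 2 * v 3 = 0 := by
          rw [show v 0 * v 1 * v 2 * v 3 = v 0 * (v 1 * v 2 * v 3) by ring, t0, mul_zero]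
        rw [h4, zero_add] at he
        have := (mul_eq_zero.mp he).resolve_left hβ
        exact pow_eq_zero_iff (by norm_num) |>.mp this
      exact coord_case v hv t0 t1 t2 t3 hs
    · rintro ⟨i, t, ht, rfl⟩
      constructor
      · rw [hP, hS]
        fin_cases i <;> simp [Pi.single_apply]
      · intro j
        rw [hder j]
        fin_cases i <;> fin_cases j <;> simp [Pi.single_apply]
  have part1 : {p : Projectivization K (Fin 4 → K) |
        eval p.rep (P + C β * S ^ 2) = 0 ∧ ∀ i, eval p.rep (pderiv i (P + C β * S ^ 2)) = 0} =
      {p : Projectivization K (Fin 4 → K) |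
        ∃ (i : Fin 4) (t : K), t ≠ 0 ∧ p.rep = t • (Pi.single i 1 : Fin 4 → K)} := by
    ext p
    exact key p.rep p.rep_nonzero
  have hne : ∀ i : Fin 4, (Pi.single i 1 : Fin 4 → K) ≠ 0 := by
    intro i h
    have := congrFun h i
    simp at this
  refine ⟨part1, ?_, ?_⟩
  · rw [part1]
    have himg : {p : Projectivization K (Fin 4 → K) |
        ∃ (i : Fin 4) (t : K), t ≠ 0 ∧ p.rep = t • (Pi.single i 1 : Fin 4 → K)} =
        Set.range (fun i : Fin 4 => Projectivization.mk K (Pi.single i 1) (hne i)) := by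
      ext p
      constructor
      · rintro ⟨i, t, ht, hp⟩
        refine ⟨i, ?_⟩
        have : Projectivization.mk K (Pi.single i 1) (hne i) =
            Projectivization.mk K p.rep p.rep_nonzero := by
          rw [Projectivization.mk_eq_mk_iff]
          refine ⟨(Units.mk0 t ht)⁻¹, ?_⟩
          rw [hp]
          simp [Units.smul_def, smul_smul, inv_mul_cancel₀ ht]
        simp only [this, Projectivization.mk_rep]
      · rintro ⟨i, rfl⟩
        obtain ⟨a, ha⟩ := Projectivization.exists_smul_eq_mk_rep K (Pi.single i 1) (hne i)
        exact ⟨i, a, a.ne_zero, ha.symm⟩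
    rw [himg]
    have hinj : Function.Injective
        (fun i : Fin 4 => Projectivization.mk K (Pi.single i 1) (hne i)) := by
      intro i j h
      simp only [Projectivization.mk_eq_mk_iff] at h
      obtain ⟨a, ha⟩ := h
      by_contra hij
      have := congrFun ha i
      simp [Pi.single_apply, hij, Units.smul_def] at this
    rw [← Set.image_univ, Set.ncard_image_of_injective _ hinj]
    simp [Set.ncard_univ]
  · intro p hp
    obtain ⟨i, t, ht, hv⟩ := (key p.rep p.rep_nonzero).mp hp
    rw [quadPart]
    fin_cases i
    · refine quad_core hβ ht (L := X 1 + X 2 + X 3) (Q3 := X 1 * X 2 * X 3) ?_ ?_ ?_ ?_ ?_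
      · have h := ((isHomogeneous_X K (1 : Fin 4)).add (isHomogeneous_X K 2)).add
          (isHomogeneous_X K 3)
        exact h
      · intro h
        have := congrArg (eval (Pi.single (1 : Fin 4) (1 : K))) h
        simp [Pi.single_apply] at this
      · have h := ((isHomogeneous_X K (1 : Fin 4)).mul (isHomogeneous_X K 2)).mul
          (isHomogeneous_X K 3)
        norm_num at h; exact h
      · rw [hv]
        simp [Pi.single_apply]
        ring
      · rw [hv]
        simp [Pi.single_apply]
        ring
    · refine quad_core hβ ht (L := X 0 + X 2 + X 3) (Q3 := X 0 * X 2 * X 3) ?_ ?_ ?_ ?_ ?_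
      · have h := ((isHomogeneous_X K (0 : Fin 4)).add (isHomogeneous_X K 2)).add
          (isHomogeneous_X K 3)
        exact h
      · intro h
        have := congrArg (eval (Pi.single (0 : Fin 4) (1 : K))) h
        simp [Pi.single_apply] at this
      · have h := ((isHomogeneous_X K (0 : Fin 4)).mul (isHomogeneous_X K 2)).mul
          (isHomogeneous_X K 3)
        norm_num at h; exact h
      · rw [hv]
        simp [Pi.single_apply]
        ring
      · rw [hv]
        simp [Pi.single_apply]
        ring
    · refine quad_core hβ ht (L := X 0 + X 1 + X 3) (Q3 := X 0 * X 1 * X 3) ?_ ?_ ?_ ?_ ?_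
      · have h := ((isHomogeneous_X K (0 : Fin 4)).add (isHomogeneous_X K 1)).add
          (isHomogeneous_X K 3)
        exact h
      · intro h
        have := congrArg (eval (Pi.single (0 : Fin 4) (1 : K))) h
        simp [Pi.single_apply] at this
      · have h := ((isHomogeneous_X K (0 : Fin 4)).mul (isHomogeneous_X K 1)).mul
          (isHomogeneous_X K 3)
        norm_num at h; exact h
      · rw [hv]
        simp [Pi.single_apply]
        ring
      · rw [hv]
        simp [Pi.single_apply]
        ring
    · refine quad_core hβ ht (L := X 0 + X 1 + X 2) (Q3 := X 0 * X 1 * X 2) ?_ ?_ ?_ ?_ ?_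
      · have h := ((isHomogeneous_X K (0 : Fin 4)).add (isHomogeneous_X K 1)).add
          (isHomogeneous_X K 2)
        exact h
      · intro h
        have := congrArg (eval (Pi.single (0 : Fin 4) (1 : K))) h
        simp [Pi.single_apply] at this
      · have h := ((isHomogeneous_X K (0 : Fin 4)).mul (isHomogeneous_X K 1)).mul
          (isHomogeneous_X K 2)
        norm_num at h; exact h
      · rw [hv]
        simp [Pi.single_apply]
        ring
      · rw [hv]
        simp [Pi.single_apply]
        ring
end
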